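/- arXiv:0909.2080 — 3 statements merged into one kernel-verified Lean document; each statement's English description precedes it below -/
import Mathlib

section
/- Let G be a finite abelian group and let S = S₁·g be a zero-sum free sequence over G, where g ∈ G is an element of order 2 and S₁ is a nonempty sequence. Then f(S) ≥ f(S₁) + 2. -/
open Multiset

/-- `S` is zero-sum free: no nonempty subsequence (sub-multiset) of `S` sums to `0`. -/
def ZeroSumFree {G : Type*} [AddCommGroup G] (S : Multiset G) : Prop :=
  ∀ T : Multiset G, T ≤ S → T ≠ 0 → T.sum ≠ 0

/-- `Σ(S)`: the set of elements expressible as the sum of a nonempty subsequence of `S`. -/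
def SubSums {G : Type*} [AddCommGroup G] (S : Multiset G) : Set G :=
  {x | ∃ T : Multiset G, T ≤ S ∧ T ≠ 0 ∧ T.sum = x}

/-- `f(S) = |Σ(S)|`. -/
noncomputable def fseq {G : Type*} [AddCommGroup G] (S : Multiset G) : ℕ :=
  (SubSums S).ncard

/-- `S` is `g`-smooth: `S = (n₁g)(n₂g)⋯(n_lg)` with `1 = n₁ ≤ ⋯ ≤ n_l`,
`n = n₁ + ⋯ + n_l < ord(g)` and `Σ(S) = {g, 2g, …, ng}`. -/
def IsSmoothAt {G : Type*} [AddCommGroup G] (g : G) (S : Multiset G) : Prop :=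
  ∃ ns : List ℕ,
    ns.Pairwise (· ≤ ·) ∧ ns.head? = some 1 ∧
    S = ↑(ns.map (fun n => n • g)) ∧
    ns.sum < addOrderOf g ∧
    SubSums S = {x | ∃ m : ℕ, 1 ≤ m ∧ m ≤ ns.sum ∧ x = m • g}

/-- `S` is smooth if it is `g`-smooth for some `g ∈ G`. -/
def IsSmooth {G : Type*} [AddCommGroup G] (S : Multiset G) : Prop :=
  ∃ g : G, IsSmoothAt g S

/-!
Both `g` and `g + σ(S₁)` lie in `Σ(S₁·g)`, and neither lies in `Σ(S₁)`: a subsequence `T` of `S₁`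
with sum `g = -g` would make `T·g` a zero-sum, and one with sum `g + σ(S₁)` would make the
complement `(S₁ - T)·g` a zero-sum. They are distinct because `σ(S₁) ≠ 0`.
-/

section SubSums

variable {G : Type*} [AddCommGroup G]

theorem subSums_finite (S : Multiset G) : (SubSums S).Finite := by
  classical
  refine ((S.powerset.toFinset.image Multiset.sum : Finset G).finite_toSet).subset ?_
  rintro x ⟨T, hT, -, rfl⟩
  simpa using ⟨T, hT, rfl⟩

theorem subSums_mono {S S' : Multiset G} (h : S ≤ S') : SubSums S ⊆ SubSums S' :=
  fun _ ⟨T, hT, hT0, hTx⟩ => ⟨T, hT.trans h, hT0, hTx⟩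

theorem mem_subSums_of_mem {S : Multiset G} {x : G} (hx : x ∈ S) : x ∈ SubSums S :=
  ⟨{x}, Multiset.singleton_le.mpr hx, Multiset.singleton_ne_zero x, Multiset.sum_singleton x⟩

theorem sum_mem_subSums {S : Multiset G} (hS : S ≠ 0) : S.sum ∈ SubSums S :=
  ⟨S, le_rfl, hS, rfl⟩

theorem ZeroSumFree.mono {S S' : Multiset G} (h : ZeroSumFree S') (hS : S ≤ S') :
    ZeroSumFree S :=
  fun T hT => h T (hT.trans hS)

theorem ZeroSumFree.sum_ne_zero {S : Multiset G} (h : ZeroSumFree S) (hS : S ≠ 0) :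
    S.sum ≠ 0 :=
  h S le_rfl hS

theorem ZeroSumFree.neg_sum_notMem_subSums {S R : Multiset G} (h : ZeroSumFree (S + R))
    (hR : R ≠ 0) : -R.sum ∉ SubSums S := by
  rintro ⟨T, hT, -, hTsum⟩
  refine h (T + R) (add_le_add_left hT R) (by simp [hR]) ?_
  rw [Multiset.sum_add, hTsum, neg_add_cancel]

theorem ZeroSumFree.sum_add_sum_notMem_subSums {S R : Multiset G} (h : ZeroSumFree (S + R))
    (hR : R ≠ 0) : R.sum + S.sum ∉ SubSums S := by
  classical
  rintro ⟨T, hT, -, hTsum⟩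
  refine h (S - T + R) (add_le_add_left (Multiset.sub_le_self S T) R) (by simp [hR]) ?_
  have hsplit : T.sum + (S - T).sum = S.sum := by
    rw [← Multiset.sum_add, add_tsub_cancel_of_le hT]
  calc (S - T + R).sum = T.sum + (S - T).sum - T.sum + R.sum := by rw [Multiset.sum_add]; abel
    _ = 0 := by rw [hsplit, hTsum]; abel

end SubSums

theorem stmt13_general {G : Type*} [AddCommGroup G] (S₁ : Multiset G)
    (hS₁ : S₁ ≠ 0) (g : G) (hg : addOrderOf g = 2)
    (hS : ZeroSumFree (S₁ + {g})) :
    fseq S₁ + 2 ≤ fseq (S₁ + {g}) := by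
  have hg_notMem : g ∉ SubSums S₁ := by
    simpa [neg_eq_self_of_addOrderOf_eq_two hg] using
      hS.neg_sum_notMem_subSums (R := {g}) (by simp)
  have hgσ_notMem : g + S₁.sum ∉ SubSums S₁ := by
    simpa using hS.sum_add_sum_notMem_subSums (R := {g}) (by simp)
  have hne : g ≠ g + S₁.sum := by
    simpa using (hS.mono (Multiset.le_add_right S₁ {g})).sum_ne_zero hS₁
  have hsub : insert g (insert (g + S₁.sum) (SubSums S₁)) ⊆ SubSums (S₁ + {g}) := by
    refine Set.insert_subset (mem_subSums_of_mem (by simp)) <|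
      Set.insert_subset ?_ (subSums_mono (Multiset.le_add_right _ _))
    have := sum_mem_subSums (S := S₁ + {g}) (by simp)
    rwa [Multiset.sum_add, Multiset.sum_singleton, add_comm S₁.sum] at this
  calc fseq S₁ + 2 = (insert g (insert (g + S₁.sum) (SubSums S₁))).ncard := by
        rw [Set.ncard_insert_of_notMem (by simp [hne, hg_notMem]) ((subSums_finite S₁).insert _),
          Set.ncard_insert_of_notMem hgσ_notMem (subSums_finite S₁)]
        rfl
    _ ≤ fseq (S₁ + {g}) := Set.ncard_le_ncard hsub (subSums_finite _)

/-- If `S = S₁·g` is zero-sum free with `g` of order `2` and `S₁` nonempty, then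
`f(S) ≥ f(S₁) + 2`. -/
theorem stmt13 {G : Type*} [AddCommGroup G] [Fintype G] (S₁ : Multiset G)
    (hS₁ : S₁ ≠ 0) (g : G) (hg : addOrderOf g = 2)
    (hS : ZeroSumFree (S₁ + {g})) :
    fseq S₁ + 2 ≤ fseq (S₁ + {g}) :=
  stmt13_general S₁ hS₁ g hg hS
end

section
/- Let k, l ≥ 1 be integers and let a, b be two distinct elements of a finite abelian group G such that a^k b^l is zero-sum free and nb ≠ sa for all integers n, s with 1 ≤ n ≤ l and 1 ≤ s ≤ k. Then f(a^k b^l) = kl + k + l. -/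
open Multiset

/-!
The subsequences of `aᵏbˡ` are the `aⁱbʲ` with `(i, j) ≤ (k, l)`, so `Σ(aᵏbˡ)` is the image of
the box `[0, k] × [0, l]` minus the origin under `(i, j) ↦ i a + j b`, and it suffices that this
map is injective on the box. If `i a + j b = i' a + j' b` with `i' ≤ i`, then `d = i - i'`
satisfies either `d a + e b = 0` with `e = j - j'`, a zero sum, or `d a = e b` with `e = j' - j`,
which is excluded by `n b ≠ s a` unless one side is trivial, and then it is again a zero sum.
-/

theorem Multiset.exists_le_le_eq_add_of_le_add {α : Type*} [DecidableEq α] {s t u : Multiset α}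
    (h : u ≤ s + t) : ∃ v ≤ s, ∃ w ≤ t, u = v + w :=
  ⟨u ∩ s, inter_le_right .., u - s, tsub_le_iff_left.2 h, by rw [add_comm, sub_add_inter]⟩

theorem Multiset.le_replicate_add_replicate_iff {α : Type*} {u : Multiset α} {a b : α}
    {k l : ℕ} :
    u ≤ replicate k a + replicate l b ↔ ∃ i ≤ k, ∃ j ≤ l, u = replicate i a + replicate j b := by
  classical
  constructor
  · intro h
    obtain ⟨v, hv, w, hw, rfl⟩ := exists_le_le_eq_add_of_le_add h
    obtain ⟨i, hi, rfl⟩ := le_replicate_iff.1 hv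
    obtain ⟨j, hj, rfl⟩ := le_replicate_iff.1 hw
    exact ⟨i, hi, j, hj, rfl⟩
  · rintro ⟨i, hi, j, hj, rfl⟩
    exact add_le_add (replicate_mono a hi) (replicate_mono b hj)

theorem Multiset.replicate_add_replicate_eq_zero_iff {α : Type*} {a b : α} {i j : ℕ} :
    replicate i a + replicate j b = 0 ↔ i = 0 ∧ j = 0 := by
  rw [← card_eq_zero, card_add, card_replicate, card_replicate, Nat.add_eq_zero_iff]

section TwoElements

variable {G : Type*} [AddCommGroup G] {a b : G} {k l : ℕ}

theorem subSums_replicate_add_replicate :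
    SubSums (replicate k a + replicate l b) =
      (fun p : ℕ × ℕ => p.1 • a + p.2 • b) '' (Set.Iic (k, l) \ {0}) := by
  ext x
  simp only [SubSums, le_replicate_add_replicate_iff, Set.mem_ofPred_eq, Set.mem_image,
    Set.mem_sdiff, Set.mem_Iic, Set.mem_singleton_iff]
  constructor
  · rintro ⟨_, ⟨i, hi, j, hj, rfl⟩, hne, rfl⟩
    refine ⟨(i, j), ⟨⟨hi, hj⟩, fun h0 => hne ?_⟩, by simp [sum_replicate]⟩
    exact replicate_add_replicate_eq_zero_iff.2 (Prod.mk_eq_zero.1 h0)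
  · rintro ⟨⟨i, j⟩, ⟨⟨hi, hj⟩, hne⟩, rfl⟩
    refine ⟨_, ⟨i, hi, j, hj, rfl⟩, fun h0 => hne ?_, by simp [sum_replicate]⟩
    exact Prod.mk_eq_zero.2 (replicate_add_replicate_eq_zero_iff.1 h0)

theorem ZeroSumFree.eq_zero_of_nsmul_add_nsmul_eq_zero
    (hS : ZeroSumFree (replicate k a + replicate l b)) {i j : ℕ} (hi : i ≤ k) (hj : j ≤ l)
    (h : i • a + j • b = 0) : i = 0 ∧ j = 0 := by
  by_contra hij
  refine hS _ (le_replicate_add_replicate_iff.2 ⟨i, hi, j, hj, rfl⟩) ?_ (by simpa [sum_replicate])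
  rwa [Ne, replicate_add_replicate_eq_zero_iff]

theorem ZeroSumFree.eq_zero_of_nsmul_eq_nsmul
    (hS : ZeroSumFree (replicate k a + replicate l b))
    (hba : ∀ n s : ℕ, 1 ≤ n → n ≤ l → 1 ≤ s → s ≤ k → n • b ≠ s • a)
    {i j : ℕ} (hi : i ≤ k) (hj : j ≤ l) (h : i • a = j • b) : i = 0 ∧ j = 0 := by
  by_contra hij
  rcases Nat.eq_zero_or_pos i with rfl | hi0
  · exact hij (hS.eq_zero_of_nsmul_add_nsmul_eq_zero hi hj (by simpa using h.symm))
  rcases Nat.eq_zero_or_pos j with rfl | hj0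
  · exact hij (hS.eq_zero_of_nsmul_add_nsmul_eq_zero hi hj (by simpa using h))
  exact hba j i hj0 hj hi0 hi h.symm

theorem ZeroSumFree.injOn_nsmul_add_nsmul
    (hS : ZeroSumFree (replicate k a + replicate l b))
    (hba : ∀ n s : ℕ, 1 ≤ n → n ≤ l → 1 ≤ s → s ≤ k → n • b ≠ s • a) :
    Set.InjOn (fun p : ℕ × ℕ => p.1 • a + p.2 • b) (Set.Iic (k, l)) := by
  rintro ⟨i, j⟩ ⟨hi, hj⟩ ⟨i', j'⟩ ⟨hi', hj'⟩ (h : i • a + j • b = i' • a + j' • b)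
  wlog hii : i' ≤ i generalizing i j i' j'
  · exact (this i' j' hi' hj' i j hi hj h.symm (le_of_not_ge hii)).symm
  obtain ⟨d, rfl⟩ := Nat.exists_eq_add_of_le hii
  rcases le_total j' j with hjj | hjj
  · obtain ⟨e, rfl⟩ := Nat.exists_eq_add_of_le hjj
    have hzero : d • a + e • b = 0 := by
      rw [← sub_eq_zero.2 h]
      simp only [add_smul]
      abel
    obtain ⟨rfl, rfl⟩ := hS.eq_zero_of_nsmul_add_nsmul_eq_zero (by omega) (by omega) hzero
    rfl
  · obtain ⟨e, rfl⟩ := Nat.exists_eq_add_of_le hjj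
    have hdiff : d • a = e • b := by
      rw [← sub_eq_zero, ← sub_eq_zero.2 h]
      simp only [add_smul]
      abel
    obtain ⟨rfl, rfl⟩ := hS.eq_zero_of_nsmul_eq_nsmul hba (by omega) (by omega) hdiff
    rfl

end TwoElements

theorem stmt15_general {G : Type*} [AddCommGroup G] (k l : ℕ)
    (a b : G)
    (hS : ZeroSumFree (replicate k a + replicate l b))
    (h : ∀ n s : ℕ, 1 ≤ n → n ≤ l → 1 ≤ s → s ≤ k → n • b ≠ s • a) :
    fseq (replicate k a + replicate l b) = k * l + k + l := by
  have hbox : (Set.Iic (k, l)).ncard = (k + 1) * (l + 1) := by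
    rw [← Set.Iic_prod_Iic, Set.ncard_prod, Set.ncard_Iic_nat, Set.ncard_Iic_nat]
  rw [fseq, subSums_replicate_add_replicate,
    ((hS.injOn_nsmul_add_nsmul h).mono Set.sdiff_subset).ncard_image,
    Set.ncard_sdiff_singleton_of_mem (by simp), hbox]
  ring_nf
  omega

/-- If `k, l ≥ 1`, `a ≠ b`, `aᵏbˡ` is zero-sum free and `nb ≠ sa` for all
`1 ≤ n ≤ l`, `1 ≤ s ≤ k`, then `f(aᵏbˡ) = kl + k + l`. -/
theorem stmt15 {G : Type*} [AddCommGroup G] [Fintype G] (k l : ℕ)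
    (hk : 1 ≤ k) (hl : 1 ≤ l) (a b : G) (hab : a ≠ b)
    (hS : ZeroSumFree (replicate k a + replicate l b))
    (h : ∀ n s : ℕ, 1 ≤ n → n ≤ l → 1 ≤ s → s ≤ k → n • b ≠ s • a) :
    fseq (replicate k a + replicate l b) = k * l + k + l :=
  stmt15_general k l a b hS h
end

section
/- Let k ≥ l ≥ 1 be integers and let a, b, g be elements of a finite abelian group G with b − a = g and ord(g) = 2, such that S = a^k b^l g is zero-sum free. Then f(S) = 2(k + l) + 1. -/
open Multiset

theorem Multiset.exists_le_le_of_le_add {α : Type*} {s t u : Multiset α} (h : u ≤ s + t) :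
    ∃ u₁ u₂, u₁ ≤ s ∧ u₂ ≤ t ∧ u = u₁ + u₂ := by
  classical
  refine ⟨u ∩ s, u - s, inter_le_right, ?_, ?_⟩
  · rw [Multiset.sub_le_iff_le_add, add_comm]
    exact h
  · ext x
    rw [count_add, count_inter, count_sub]
    omega

section SubSums

variable {G : Type*} [AddCommGroup G]

theorem ZeroSumFree.zero_notMem_subSums {S : Multiset G} (h : ZeroSumFree S) :
    0 ∉ SubSums S := fun ⟨T, hT, hT0, hsum⟩ => h T hT hT0 hsum

theorem mem_subSums_add_singleton (S : Multiset G) (x : G) : x ∈ SubSums (S + {x}) :=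
  mem_subSums_of_mem (mem_add.2 (Or.inr (mem_singleton_self x)))

end SubSums

def subSumIndices (n : ℕ) : Finset (ℕ × ℕ) :=
  Finset.Icc 1 n ×ˢ Finset.range 2 ∪ {(0, 1)}

theorem mem_subSumIndices {n m d : ℕ} :
    (m, d) ∈ subSumIndices n ↔ 1 ≤ m ∧ m ≤ n ∧ d < 2 ∨ m = 0 ∧ d = 1 := by
  simp [subSumIndices, and_assoc, or_comm]

theorem card_subSumIndices (n : ℕ) : (subSumIndices n).card = 2 * n + 1 := by
  rw [subSumIndices, Finset.card_union_of_disjoint (by simp), Finset.card_product]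
  simp only [Nat.card_Icc, Finset.card_range, Finset.card_singleton]
  omega

section TwoTorsion

variable {G : Type*} [AddCommGroup G] {a g : G} {k l : ℕ}

theorem sum_replicate_add_replicate_add_replicate (hg : 2 • g = 0) (i j e : ℕ) :
    (replicate i a + replicate j (a + g) + replicate e g).sum =
      (i + j) • a + ((j + e) % 2) • g := by
  rw [← nsmul_eq_mod_nsmul _ hg]
  simp only [sum_add, sum_replicate, smul_add, add_smul]
  abel

theorem nsmul_add_nsmul_mem_subSums (hg : 2 • g = 0) {m : ℕ} (hm₀ : 1 ≤ m) (hm : m ≤ k + l)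
    (d : ℕ) : m • a + d • g ∈ SubSums (replicate k a + replicate l (a + g) + {g}) := by
  -- as many copies of `a` as possible, the rest `a + g`, and one `g` if the parity requires it
  set i := min m k
  set e := (d + (m - i)) % 2
  refine ⟨replicate i a + replicate (m - i) (a + g) + replicate e g, ?_, ?_, ?_⟩
  · rw [← replicate_one]
    exact add_le_add (add_le_add (replicate_mono _ (by omega)) (replicate_mono _ (by omega)))
      (replicate_mono _ (by omega))
  · intro h
    have := congrArg card h
    simp only [card_add, card_replicate, card_zero] at this
    omega
  · rw [sum_replicate_add_replicate_add_replicate hg, Nat.add_sub_cancel' (min_le_left m k),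
      nsmul_eq_mod_nsmul d hg]
    congr 2
    omega

theorem subSums_eq_image (hg : 2 • g = 0) :
    SubSums (replicate k a + replicate l (a + g) + {g}) =
      (fun p : ℕ × ℕ => p.1 • a + p.2 • g) '' subSumIndices (k + l) := by
  apply Set.Subset.antisymm
  · rintro _ ⟨T, hT, hT0, rfl⟩
    obtain ⟨T', T₃, hT', hT₃, rfl⟩ := exists_le_le_of_le_add hT
    obtain ⟨T₁, T₂, hT₁, hT₂, rfl⟩ := exists_le_le_of_le_add hT'
    rw [← replicate_one] at hT₃
    obtain ⟨i, hi, rfl⟩ := le_replicate_iff.1 hT₁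
    obtain ⟨j, hj, rfl⟩ := le_replicate_iff.1 hT₂
    obtain ⟨e, he, rfl⟩ := le_replicate_iff.1 hT₃
    have hije : i + j + e ≠ 0 := by
      contrapose! hT0
      simp [show i = 0 by omega, show j = 0 by omega, show e = 0 by omega]
    exact ⟨(i + j, (j + e) % 2), mem_subSumIndices.2 (by omega),
      (sum_replicate_add_replicate_add_replicate hg i j e).symm⟩
  · rintro _ ⟨⟨m, d⟩, hmd, rfl⟩
    rcases mem_subSumIndices.1 hmd with ⟨hm₀, hm, -⟩ | ⟨rfl, rfl⟩
    · exact nsmul_add_nsmul_mem_subSums hg hm₀ hm d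
    · simpa using mem_subSums_add_singleton _ g

theorem eq_of_nsmul_add_nsmul_eq (hg : 2 • g = 0)
    (h0 : 0 ∉ SubSums (replicate k a + replicate l (a + g) + {g})) {m d m' d' : ℕ}
    (hmd : (m, d) ∈ subSumIndices (k + l)) (hmd' : (m', d') ∈ subSumIndices (k + l))
    (hle : m' ≤ m) (h : m • a + d • g = m' • a + d' • g) : m = m' ∧ d = d' := by
  have hdiff : (m - m') • a + (d + d') • g = 0 := by
    have h2d' : (d' + d') • g = 0 := by rw [← two_mul, mul_nsmul, hg, nsmul_zero]
    rw [← add_right_inj (m' • a), ← add_assoc, ← add_smul, Nat.add_sub_cancel' hle, add_smul,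
      ← add_assoc, h, add_assoc, ← add_smul, h2d', add_zero]
  rw [mem_subSumIndices] at hmd hmd'
  rcases hle.lt_or_eq with hlt | rfl
  · exact absurd (hdiff ▸ nsmul_add_nsmul_mem_subSums hg (by omega) (by omega) (d + d')) h0
  · refine ⟨rfl, by_contra fun hne => h0 ?_⟩
    have hg0 : g = 0 := by simpa [show d + d' = 1 by omega] using hdiff
    simpa [hg0] using mem_subSums_add_singleton _ g

theorem injOn_subSumIndices (hg : 2 • g = 0)
    (h0 : 0 ∉ SubSums (replicate k a + replicate l (a + g) + {g})) :
    Set.InjOn (fun p : ℕ × ℕ => p.1 • a + p.2 • g) (subSumIndices (k + l)) := by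
  rintro ⟨m, d⟩ hmd ⟨m', d'⟩ hmd' h
  rcases le_total m' m with hle | hle
  · obtain ⟨rfl, rfl⟩ := eq_of_nsmul_add_nsmul_eq hg h0 hmd hmd' hle h
    rfl
  · obtain ⟨rfl, rfl⟩ := eq_of_nsmul_add_nsmul_eq hg h0 hmd' hmd hle h.symm
    rfl

end TwoTorsion

theorem stmt17_general {G : Type*} [AddCommGroup G] (k l : ℕ)
    (a b g : G) (hg : b - a = g)
    (hord : addOrderOf g = 2)
    (hS : ZeroSumFree (replicate k a + replicate l b + {g})) :
    fseq (replicate k a + replicate l b + {g}) = 2 * (k + l) + 1 := by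
  obtain rfl : b = a + g := by rw [← hg]; abel
  have hg2 : 2 • g = 0 := hord ▸ addOrderOf_nsmul_eq_zero g
  rw [fseq, subSums_eq_image hg2,
    (injOn_subSumIndices hg2 hS.zero_notMem_subSums).ncard_image, Set.ncard_coe_finset,
    card_subSumIndices]

/-- Lemma 2.6: if `k ≥ l ≥ 1`, `b - a = g`, `ord(g) = 2` and `S = aᵏbˡg` is
zero-sum free, then `f(S) = 2(k + l) + 1`. -/
theorem stmt17 {G : Type*} [AddCommGroup G] [Fintype G] (k l : ℕ)
    (hl : 1 ≤ l) (hkl : l ≤ k) (a b g : G) (hg : b - a = g)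
    (hord : addOrderOf g = 2)
    (hS : ZeroSumFree (replicate k a + replicate l b + {g})) :
    fseq (replicate k a + replicate l b + {g}) = 2 * (k + l) + 1 :=
  stmt17_general k l a b g hg hord hS
end
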